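/- arXiv:1802.09667 — 2 statements merged into one kernel-verified Lean document; each statement's English description precedes it below -/
import Mathlib

section
/- Let Z be a p-dimensional random vector with square-integrable entries, E[Z] = 0 and E[ZZᵀ] = I_p. Let P be a symmetric idempotent (orthogonal projection) p×p real matrix, and let ν, a ∈ ℝ^p with Pν = 0. If E[νᵀZ | σ(PZ)] = aᵀPZ almost surely, then aᵀPa = 0 and aᵀPZ = 0 almost surely. -/
/-!
Write `W = aᵀPZ = (Pa)ᵀZ`. Since `W` is `σ(PZ)`-measurable, pulling it out of the conditional
expectation gives `E[W νᵀZ] = E[W E[νᵀZ | σ(PZ)]] = E[W²]`. Isotropy of `Z` turns both second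
moments into inner products: `E[W νᵀZ] = (Pa)ᵀν = aᵀPν = 0` and `E[W²] = |Pa|² = aᵀPa`.
Hence `aᵀPa = E[W²] = 0`, which forces `W = 0` almost surely.
-/

open MeasureTheory Matrix Filter

section

variable {Ω ι : Type*} [Fintype ι] [MeasurableSpace Ω] {μ : Measure Ω} {Z : Ω → ι → ℝ}

lemma memLp_dotProduct (hZ : ∀ i, MemLp (fun ω => Z ω i) 2 μ) (u : ι → ℝ) :
    MemLp (fun ω => u ⬝ᵥ Z ω) 2 μ := by
  simpa [dotProduct, Finset.sum_fn] using
    memLp_finsetSum' (μ := μ) Finset.univ fun i _ => (hZ i).const_mul (u i)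

lemma integral_dotProduct_mul_dotProduct (hZ : ∀ i, MemLp (fun ω => Z ω i) 2 μ) (u v : ι → ℝ) :
    ∫ ω, (u ⬝ᵥ Z ω) * (v ⬝ᵥ Z ω) ∂μ = u ⬝ᵥ (of fun i j => ∫ ω, Z ω i * Z ω j ∂μ) *ᵥ v := by
  have hint : ∀ i j, Integrable (fun ω => u i * (Z ω i * Z ω j) * v j) μ := fun i j =>
    (((hZ i).integrable_mul (hZ j)).const_mul (u i)).mul_const (v j)
  have hexpand : ∀ ω, (u ⬝ᵥ Z ω) * (v ⬝ᵥ Z ω) = ∑ i, ∑ j, u i * (Z ω i * Z ω j) * v j := by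
    intro ω
    simp only [dotProduct, Finset.sum_mul_sum]
    exact Finset.sum_congr rfl fun i _ => Finset.sum_congr rfl fun j _ => by ring
  simp_rw [hexpand]
  rw [integral_finsetSum _ fun i _ => integrable_finsetSum _ fun j _ => hint i j]
  simp only [dotProduct, mulVec, of_apply, Finset.mul_sum]
  refine Finset.sum_congr rfl fun i _ => ?_
  rw [integral_finsetSum _ fun j _ => hint i j]
  refine Finset.sum_congr rfl fun j _ => ?_
  rw [integral_mul_const, integral_const_mul, mul_assoc]

end

lemma integral_mul_eq_integral_mul_self_of_condExp_ae_eq {Ω : Type*} {m m₀ : MeasurableSpace Ω}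
    {μ : Measure Ω} [IsFiniteMeasure μ] {X W : Ω → ℝ} (hW : StronglyMeasurable[m] W)
    (hX : Integrable X μ) (hWX : Integrable (W * X) μ) (hXW : μ[X|m] =ᵐ[μ] W) :
    ∫ ω, W ω * X ω ∂μ = ∫ ω, W ω * W ω ∂μ := by
  by_cases hm : m ≤ m₀
  · calc ∫ ω, W ω * X ω ∂μ = ∫ ω, μ[W * X|m] ω ∂μ := (integral_condExp hm).symm
      _ = ∫ ω, W ω * W ω ∂μ := integral_congr_ae <|
          (condExp_mul_of_stronglyMeasurable_left hW hWX hX).trans (EventuallyEq.rfl.mul hXW)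
  -- Junk value: `μ[X|m] = 0` when `m ≰ m₀`, so then `W = 0` a.e.
  · have hW0 : W =ᵐ[μ] 0 := by rw [condExp_of_not_le hm] at hXW; exact hXW.symm
    have hWf : ∀ f : Ω → ℝ, ∫ ω, W ω * f ω ∂μ = 0 := fun f =>
      (integral_congr_ae (hW0.mul (EventuallyEq.refl _ f))).trans (by simp)
    rw [hWf, hWf]

theorem stmt10_general {Ω : Type*} [MeasurableSpace Ω] (μ : Measure Ω) [IsProbabilityMeasure μ]
    (p : ℕ) (Z : Ω → Fin p → ℝ)
    (hZL2 : ∀ i, MemLp (fun ω => Z ω i) 2 μ)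
    (hZcov : ∀ i j, ∫ ω, Z ω i * Z ω j ∂μ = (1 : Matrix (Fin p) (Fin p) ℝ) i j)
    (P : Matrix (Fin p) (Fin p) ℝ) (hPsymm : Pᵀ = P) (hPidem : P * P = P)
    (ν a : Fin p → ℝ) (hPν : P.mulVec ν = 0)
    (hcond : μ[fun ω => ν ⬝ᵥ Z ω |
        MeasurableSpace.comap (fun ω => P.mulVec (Z ω)) inferInstance]
      =ᵐ[μ] fun ω => a ⬝ᵥ P.mulVec (Z ω)) :
    a ⬝ᵥ P.mulVec a = 0 ∧ (fun ω => a ⬝ᵥ P.mulVec (Z ω)) =ᵐ[μ] fun _ => 0 := by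
  set W := fun ω => a ⬝ᵥ P *ᵥ Z ω
  have hPa : ∀ x, a ⬝ᵥ P *ᵥ x = P *ᵥ a ⬝ᵥ x := fun x => by
    rw [dotProduct_mulVec, ← mulVec_transpose, hPsymm]
  have hcov : of (fun i j => ∫ ω, Z ω i * Z ω j ∂μ) = 1 := Matrix.ext hZcov
  have hWL2 : MemLp W 2 μ := by simpa only [W, hPa] using memLp_dotProduct hZL2 (P *ᵥ a)
  have hνL2 := memLp_dotProduct hZL2 ν
  have hWmeas : StronglyMeasurable[MeasurableSpace.comap (fun ω => P *ᵥ Z ω) inferInstance] W :=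
    ((by fun_prop : Measurable fun x => a ⬝ᵥ x).comp (comap_measurable _)).stronglyMeasurable
  have hpullout := integral_mul_eq_integral_mul_self_of_condExp_ae_eq hWmeas
    (hνL2.integrable one_le_two) (hWL2.integrable_mul hνL2) hcond
  have hcross : ∫ ω, W ω * (ν ⬝ᵥ Z ω) ∂μ = 0 := by
    simp only [W, hPa, integral_dotProduct_mul_dotProduct hZL2, hcov, one_mulVec]
    rw [← hPa, hPν, dotProduct_zero]
  have hsq : ∫ ω, W ω * W ω ∂μ = a ⬝ᵥ P *ᵥ a := by
    simp only [W, hPa, integral_dotProduct_mul_dotProduct hZL2, hcov, one_mulVec]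
    rw [← hPa, mulVec_mulVec, hPidem, hPa]
  have haPa : a ⬝ᵥ P *ᵥ a = 0 := by rw [← hsq, ← hpullout, hcross]
  refine ⟨haPa, ?_⟩
  have hW2 := (integral_eq_zero_iff_of_nonneg (fun ω => mul_self_nonneg (W ω))
    (hWL2.integrable_mul hWL2)).mp (hsq.trans haPa)
  filter_upwards [hW2] with ω hω using mul_self_eq_zero.mp hω

/-- Let `Z` be a `p`-dimensional random vector with square-integrable entries,
`E[Z] = 0` and `E[ZZᵀ] = I_p`. Let `P` be a symmetric idempotent `p × p` matrix and let
`ν, a ∈ ℝ^p` with `Pν = 0`. If `E[νᵀZ | σ(PZ)] = aᵀPZ` a.s., then `aᵀPa = 0` and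
`aᵀPZ = 0` a.s. -/
theorem stmt10 {Ω : Type*} [MeasurableSpace Ω] (μ : Measure Ω) [IsProbabilityMeasure μ]
    (p : ℕ) (Z : Ω → Fin p → ℝ) (hZmeas : Measurable Z)
    (hZL2 : ∀ i, MemLp (fun ω => Z ω i) 2 μ)
    (hZmean : ∀ i, ∫ ω, Z ω i ∂μ = 0)
    (hZcov : ∀ i j, ∫ ω, Z ω i * Z ω j ∂μ = (1 : Matrix (Fin p) (Fin p) ℝ) i j)
    (P : Matrix (Fin p) (Fin p) ℝ) (hPsymm : Pᵀ = P) (hPidem : P * P = P)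
    (ν a : Fin p → ℝ) (hPν : P.mulVec ν = 0)
    (hcond : μ[fun ω => ν ⬝ᵥ Z ω |
        MeasurableSpace.comap (fun ω => P.mulVec (Z ω)) inferInstance]
      =ᵐ[μ] fun ω => a ⬝ᵥ P.mulVec (Z ω)) :
    a ⬝ᵥ P.mulVec a = 0 ∧ (fun ω => a ⬝ᵥ P.mulVec (Z ω)) =ᵐ[μ] fun _ => 0 :=
  stmt10_general μ p Z hZL2 hZcov P hPsymm hPidem ν a hPν hcond
end

section
/- Let W_1,…,W_n be i.i.d. {0,1}-valued random variables with mean q ≥ p_min > 0, let τ > 0, let p ≥ 1, and suppose log p / n ≤ p_min²/(4+2τ)². Writing q̂ = n^{-1}∑_{i=1}^n W_i, we have P( |q̂^{-1} − q^{-1}| ≥ (4+2τ) p_min^{-2} (log p / n)^{1/2} ) ≤ 4 p^{−τ−2}. -/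
/-!
If `|q̂ - q| < t` with `t = (τ + 2) √(log p / n) ≤ p_min / 2`, then `q̂, q > p_min / 2`, so
`|q̂⁻¹ - q⁻¹| = |q̂ - q| / (q̂ q) < 2 t / p_min²`, which is exactly the threshold. Hence the event
forces `|∑ (W i - q)| ≥ n t`, and two-sided Hoeffding bounds its probability by
`2 exp (-2 n t²) = 2 p ^ (-2 (τ + 2)²) ≤ 2 p ^ (-τ - 2)`.
-/

open MeasureTheory ProbabilityTheory Real Set
open scoped NNReal

section Hoeffding

variable {Ω : Type*} [MeasurableSpace Ω] {μ : Measure Ω}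

lemma ProbabilityTheory.HasSubgaussianMGF.measure_abs_ge_le {X : Ω → ℝ} {c : ℝ≥0}
    (h : HasSubgaussianMGF X c μ) {ε : ℝ} (hε : 0 ≤ ε) :
    μ.real {ω | ε ≤ |X ω|} ≤ 2 * exp (-ε ^ 2 / (2 * c)) := by
  have hsplit : {ω | ε ≤ |X ω|} = {ω | ε ≤ X ω} ∪ {ω | ε ≤ (-X) ω} := by
    ext ω; simp [le_abs]
  calc μ.real {ω | ε ≤ |X ω|}
      ≤ μ.real {ω | ε ≤ X ω} + μ.real {ω | ε ≤ (-X) ω} := hsplit ▸ measureReal_union_le _ _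
    _ ≤ 2 * exp (-ε ^ 2 / (2 * c)) := by
      linarith [h.measure_ge_le hε, h.neg.measure_ge_le hε]

lemma hasSubgaussianMGF_sum_sub_integral_of_mem_Icc [IsProbabilityMeasure μ] {ι : Type*}
    [Fintype ι] {X : ι → Ω → ℝ} (hX : ∀ i, AEMeasurable (X i) μ) (hindep : iIndepFun X μ)
    {a b : ℝ} (hab : ∀ i, ∀ᵐ ω ∂μ, X i ω ∈ Icc a b) :
    HasSubgaussianMGF (fun ω ↦ ∑ i, (X i ω - μ[X i]))
      (Fintype.card ι * (‖b - a‖₊ / 2) ^ 2) μ := by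
  have hindep' : iIndepFun (fun i ω ↦ X i ω - μ[X i]) μ := by
    simpa only [Function.comp_def] using
      hindep.comp (fun i (x : ℝ) ↦ x - μ[X i]) fun _ ↦ measurable_id.sub_const _
  have := HasSubgaussianMGF.sum_of_iIndepFun hindep' (s := Finset.univ)
    fun i _ ↦ hasSubgaussianMGF_of_mem_Icc (hX i) (hab i)
  simpa [Finset.sum_const, Finset.card_univ, nsmul_eq_mul] using this

/-- Hoeffding's inequality, two-sided. -/
lemma measure_abs_sum_sub_integral_ge_le [IsProbabilityMeasure μ] {ι : Type*} [Fintype ι]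
    {X : ι → Ω → ℝ} (hX : ∀ i, AEMeasurable (X i) μ) (hindep : iIndepFun X μ)
    {a b : ℝ} (hab : ∀ i, ∀ᵐ ω ∂μ, X i ω ∈ Icc a b) {ε : ℝ} (hε : 0 ≤ ε) :
    μ.real {ω | ε ≤ |∑ i, (X i ω - μ[X i])|}
      ≤ 2 * exp (-2 * ε ^ 2 / (Fintype.card ι * (b - a) ^ 2)) := by
  convert (hasSubgaussianMGF_sum_sub_integral_of_mem_Icc hX hindep hab).measure_abs_ge_le hε
    using 3
  push_cast
  rw [norm_eq_abs, div_pow, sq_abs,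
    show 2 * (Fintype.card ι * ((b - a) ^ 2 / 2 ^ 2)) = Fintype.card ι * (b - a) ^ 2 / 2 by ring,
    div_div_eq_mul_div]
  ring

end Hoeffding

lemma le_abs_sub_of_le_abs_inv_sub_inv {a q m t : ℝ} (ha : 0 < a) (haq : a ≤ q)
    (hta : t ≤ a / 2) (h : 2 * t / a ^ 2 ≤ |m⁻¹ - q⁻¹|) : t ≤ |m - q| := by
  by_contra! hmq
  have hm : a / 2 < m := by linarith [(abs_lt.mp hmq).1]
  have hmq_pos : a ^ 2 / 2 < m * q := by nlinarith
  have hm0 : 0 < m := by linarith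
  have hq0 : 0 < q := by linarith
  have : |m⁻¹ - q⁻¹| < 2 * t / a ^ 2 := by
    rw [inv_sub_inv hm0.ne' hq0.ne', abs_div, abs_of_pos (mul_pos hm0 hq0), abs_sub_comm,
      div_lt_div_iff₀ (mul_pos hm0 hq0) (by positivity)]
    nlinarith [abs_nonneg (m - q)]
  linarith

lemma sum_sub_eq_mul_mean_sub {n : ℕ} (hn : 0 < n) (w : Fin n → ℝ) (q : ℝ) :
    ∑ i, (w i - q) = n * ((n : ℝ)⁻¹ * ∑ i, w i - q) := by
  have : (n : ℝ) ≠ 0 := by positivity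
  simp only [Finset.sum_sub_distrib, Finset.sum_const, Finset.card_univ, Fintype.card_fin,
    nsmul_eq_mul]
  field_simp

lemma exp_neg_two_mul_sq_mul_log_le_rpow {p s : ℝ} (hp : 1 ≤ p) (hs : 1 / 2 ≤ s) :
    exp (-2 * s ^ 2 * log p) ≤ p ^ (-s) := by
  rw [rpow_def_of_pos (by linarith), exp_le_exp]
  nlinarith [mul_nonneg (mul_nonneg (by linarith : 0 ≤ s) (by linarith : 0 ≤ 2 * s - 1))
    (log_nonneg hp)]

theorem stmt15_general {Ω : Type*} [MeasurableSpace Ω] (μ : Measure Ω) [IsProbabilityMeasure μ]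
    (n : ℕ) (hn : 0 < n) (W : Fin n → Ω → ℝ) (hWmeas : ∀ i, Measurable (W i))
    (hW01 : ∀ i ω, W i ω = 0 ∨ W i ω = 1)
    (hindep : iIndepFun W μ)
    (q pmin : ℝ) (hpmin : 0 < pmin) (hqpmin : pmin ≤ q) (hq : ∀ i, ∫ ω, W i ω ∂μ = q)
    (τ : ℝ) (hτ : 0 < τ) (p : ℝ) (hp : 1 ≤ p)
    (hlogp : Real.log p / n ≤ pmin ^ 2 / (4 + 2 * τ) ^ 2) :
    (μ {ω | (4 + 2 * τ) * pmin⁻¹ ^ 2 * Real.sqrt (Real.log p / n)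
        ≤ |((n : ℝ)⁻¹ * ∑ i, W i ω)⁻¹ - q⁻¹|}).toReal
      ≤ 4 * p ^ (-τ - 2) := by
  set δ := √(log p / n)
  have hn' : (0 : ℝ) < n := by exact_mod_cast hn
  have hδ_sq : n * δ ^ 2 = log p := by 
    rw [sq_sqrt (div_nonneg (log_nonneg hp) hn'.le)]; field_simp
  have ht : (τ + 2) * δ ≤ pmin / 2 := calc
    (τ + 2) * δ ≤ (τ + 2) * (pmin / (4 + 2 * τ)) := mul_le_mul_of_nonneg_left
      (sqrt_le_iff.mpr ⟨by positivity, by rwa [div_pow]⟩) (by linarith)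
    _ = pmin / 2 := by field_simp; ring
  have hevent : {ω | (4 + 2 * τ) * pmin⁻¹ ^ 2 * δ ≤ |((n : ℝ)⁻¹ * ∑ i, W i ω)⁻¹ - q⁻¹|}
      ⊆ {ω | n * ((τ + 2) * δ) ≤ |∑ i, (W i ω - μ[W i])|} := fun ω hω ↦ by
    have hthreshold : (4 + 2 * τ) * pmin⁻¹ ^ 2 * δ = 2 * ((τ + 2) * δ) / pmin ^ 2 := by
      field_simp; ring
    have hmean := le_abs_sub_of_le_abs_inv_sub_inv (m := (n : ℝ)⁻¹ * ∑ i, W i ω) hpmin hqpmin ht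
      (hthreshold ▸ hω)
    simp only [mem_ofPred_eq, hq, sum_sub_eq_mul_mean_sub hn, abs_mul, abs_of_pos hn']
    gcongr
  have hhoeff := measure_abs_sum_sub_integral_ge_le (fun i ↦ (hWmeas i).aemeasurable) hindep
    (a := 0) (b := 1) (fun i ↦ ae_of_all _ fun ω ↦ by rcases hW01 i ω with h | h <;> simp [h])
    (ε := n * ((τ + 2) * δ)) (mul_nonneg hn'.le (mul_nonneg (by linarith) (sqrt_nonneg _)))
  have hpow := exp_neg_two_mul_sq_mul_log_le_rpow hp (s := τ + 2) (by linarith)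
  rw [neg_add'] at hpow
  calc (μ _).toReal ≤ μ.real {ω | n * ((τ + 2) * δ) ≤ |∑ i, (W i ω - μ[W i])|} :=
        measureReal_mono hevent
    _ ≤ 2 * exp (-2 * (τ + 2) ^ 2 * log p) := hhoeff.trans_eq <| by
        rw [← hδ_sq, Fintype.card_fin, sub_zero, one_pow, mul_one]; field_simp
    _ ≤ 4 * p ^ (-τ - 2) := by linarith [hpow, rpow_nonneg (by linarith : (0 : ℝ) ≤ p) (-τ - 2)]

/-- For i.i.d. `{0,1}`-valued random variables with mean `q ≥ p_min > 0`,
if `log p / n ≤ p_min²/(4+2τ)²` then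
`P(|q̂⁻¹ − q⁻¹| ≥ (4+2τ) p_min⁻² √(log p / n)) ≤ 4 p^{−τ−2}`, where `q̂` is the sample mean. -/
theorem stmt15 {Ω : Type*} [MeasurableSpace Ω] (μ : Measure Ω) [IsProbabilityMeasure μ]
    (n : ℕ) (hn : 0 < n) (W : Fin n → Ω → ℝ) (hWmeas : ∀ i, Measurable (W i))
    (hW01 : ∀ i ω, W i ω = 0 ∨ W i ω = 1)
    (hindep : iIndepFun W μ)
    (hident : ∀ i j, μ.map (W i) = μ.map (W j))
    (q pmin : ℝ) (hpmin : 0 < pmin) (hqpmin : pmin ≤ q) (hq : ∀ i, ∫ ω, W i ω ∂μ = q)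
    (τ : ℝ) (hτ : 0 < τ) (p : ℝ) (hp : 1 ≤ p)
    (hlogp : Real.log p / n ≤ pmin ^ 2 / (4 + 2 * τ) ^ 2) :
    (μ {ω | (4 + 2 * τ) * pmin⁻¹ ^ 2 * Real.sqrt (Real.log p / n)
        ≤ |((n : ℝ)⁻¹ * ∑ i, W i ω)⁻¹ - q⁻¹|}).toReal
      ≤ 4 * p ^ (-τ - 2) :=
  stmt15_general μ n hn W hWmeas hW01 hindep q pmin hpmin hqpmin hq τ hτ p hp hlogp
end
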